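/- arXiv:1112.5629 — 2 statements merged into one kernel-verified Lean document; each statement's English description precedes it below -/
import Mathlib

section
/- Let y ∈ ℝ^n be a nonzero vector whose coherence satisfies μ(y) ≤ μ₁, i.e., n‖y‖_∞² ≤ μ₁‖y‖₂². Let I₁,…,I_q be independent random indices, each uniformly distributed on {1,…,n}, and set S = Σ_{j=1}^q y_{I_j}². Then for every t > 0, P( | (n/q)·S − ‖y‖₂² | ≥ t ) ≤ 2·exp( − q t² / (2 μ₁² ‖y‖₂⁴) ). -/
open scoped BigOperators ENNReal
open MeasureTheory ProbabilityTheory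

/-!
The summands `X j = (n/q) y (I j)²` are independent, take values in `[0, μ₁ ‖y‖₂² / q]` by the
coherence bound, and have mean `‖y‖₂² / q`, so `(n/q) S - ‖y‖₂² = ∑ j, (X j - E[X j])`.
Hoeffding's inequality then bounds the probability by `2 exp (-2 q t² / (μ₁² ‖y‖₂⁴))`, which is
even a factor `4` better in the exponent than the claim.
-/

open Finset

theorem integral_comp_eq_sum_div_of_uniform {Θ α : Type*} [MeasurableSpace Θ] {μ : Measure Θ}
    [IsFiniteMeasure μ] [Fintype α] [MeasurableSpace α] [DiscreteMeasurableSpace α]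
    {J : Θ → α} (hJ : Measurable J)
    (hunif : ∀ i, μ {θ | J θ = i} = (Fintype.card α : ℝ≥0∞)⁻¹) (g : α → ℝ) :
    ∫ θ, g (J θ) ∂μ = (∑ i, g i) / Fintype.card α := by
  rw [← integral_map hJ.aemeasurable (by fun_prop), integral_fintype .of_finite, sum_div]
  refine sum_congr rfl fun i _ => ?_
  rw [measureReal_def, Measure.map_apply hJ (measurableSet_singleton i)]
  simp [Set.preimage, hunif, div_eq_inv_mul]

section Hoeffding

variable {Ω ι : Type*} [MeasurableSpace Ω] {μ : Measure Ω} [IsProbabilityMeasure μ] [Fintype ι]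
  {X : ι → Ω → ℝ} {a b ε : ℝ}

theorem measureReal_sum_sub_integral_ge_le (hindep : iIndepFun X μ)
    (hX : ∀ i, AEMeasurable (X i) μ) (hab : ∀ i, ∀ᵐ ω ∂μ, X i ω ∈ Set.Icc a b) (hε : 0 ≤ ε) :
    μ.real {ω | ε ≤ ∑ i, (X i ω - μ[X i])} ≤
      Real.exp (-2 * ε ^ 2 / (Fintype.card ι * (b - a) ^ 2)) := by
  have hcentered : iIndepFun (fun i ω => X i ω - μ[X i]) μ :=
    hindep.comp (fun i r => r - ∫ ω, X i ω ∂μ) fun _ => measurable_sub_const _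
  refine (HasSubgaussianMGF.measure_sum_ge_le_of_iIndepFun hcentered (s := univ)
    (fun i _ => hasSubgaussianMGF_of_mem_Icc (hX i) (hab i)) hε).trans_eq ?_
  congr 1
  simp only [div_pow, sum_const, card_univ, nsmul_eq_mul, NNReal.coe_mul, NNReal.coe_natCast,
    NNReal.coe_div, NNReal.coe_pow, coe_nnnorm, Real.norm_eq_abs, sq_abs, NNReal.coe_ofNat, neg_mul]
  rw [show 2 * (Fintype.card ι * ((b - a) ^ 2 / 2 ^ 2)) = Fintype.card ι * (b - a) ^ 2 / 2 by ring,
    div_div_eq_mul_div]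
  ring

theorem measureReal_abs_sum_sub_integral_ge_le (hindep : iIndepFun X μ)
    (hX : ∀ i, AEMeasurable (X i) μ) (hab : ∀ i, ∀ᵐ ω ∂μ, X i ω ∈ Set.Icc a b) (hε : 0 ≤ ε) :
    μ.real {ω | ε ≤ |∑ i, (X i ω - μ[X i])|} ≤
      2 * Real.exp (-2 * ε ^ 2 / (Fintype.card ι * (b - a) ^ 2)) := by
  have hlower := measureReal_sum_sub_integral_ge_le (X := fun i ω => -X i ω) (a := -b) (b := -a)
    (hindep.comp (fun _ r => -r) fun _ => measurable_neg) (fun i => (hX i).neg)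
    (fun i => (hab i).mono fun _ h => ⟨neg_le_neg h.2, neg_le_neg h.1⟩) hε
  simp only [integral_neg, sub_neg_eq_add, neg_add_eq_sub] at hlower
  calc μ.real {ω | ε ≤ |∑ i, (X i ω - μ[X i])|}
      ≤ μ.real ({ω | ε ≤ ∑ i, (X i ω - μ[X i])} ∪ {ω | ε ≤ ∑ i, (μ[X i] - X i ω)}) := by
        refine measureReal_mono fun ω hω => ?_
        simp only [Set.mem_ofPred_eq, Set.mem_union, ← neg_sub (X _ ω), sum_neg_distrib] at hω ⊢
        exact le_abs.mp hω
    _ ≤ _ := measureReal_union_le _ _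
    _ ≤ _ := add_le_add (measureReal_sum_sub_integral_ge_le hindep hX hab hε) hlower
    _ = _ := (two_mul _).symm

end Hoeffding

theorem stmt1_general {Θ : Type*} [MeasurableSpace Θ] (μ : Measure Θ) [IsProbabilityMeasure μ]
    (n q : ℕ) (hn : 0 < n) (hq : 0 < q)
    (y : Fin n → ℝ)
    (μ₁ : ℝ) (hcoh : ∀ i, (n : ℝ) * (y i) ^ 2 ≤ μ₁ * ∑ i', (y i') ^ 2)
    (I : Fin q → Θ → Fin n) (hmeas : ∀ j, Measurable (I j))
    (hindep : iIndepFun I μ)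
    (hunif : ∀ j i, μ {θ | I j θ = i} = (n : ℝ≥0∞)⁻¹)
    (t : ℝ) (ht : 0 < t) :
    μ {θ | t ≤ |(n : ℝ) / (q : ℝ) * (∑ j, (y (I j θ)) ^ 2) - ∑ i, (y i) ^ 2|} ≤
      ENNReal.ofReal
        (2 * Real.exp (-(q : ℝ) * t ^ 2 / (2 * μ₁ ^ 2 * (∑ i, (y i) ^ 2) ^ 2))) := by
  generalize hE : ∑ i, y i ^ 2 = E at hcoh ⊢
  set φ : Fin n → ℝ := fun i => n / q * y i ^ 2
  have hφ : ∀ i, φ i ∈ Set.Icc 0 (μ₁ * E / q) := fun i =>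
    ⟨by positivity, by
      simpa only [φ, div_mul_eq_mul_div] using div_le_div_of_nonneg_right (hcoh i) q.cast_nonneg⟩
  have hmean : ∀ j, ∫ θ, φ (I j θ) ∂μ = E / q := fun j => by
    rw [integral_comp_eq_sum_div_of_uniform (hmeas j) (by simpa using hunif j), Fintype.card_fin]
    show (∑ i, n / q * y i ^ 2) / n = E / q
    rw [← mul_sum, hE]
    field_simp
  have hsum : ∀ θ, ∑ j, (φ (I j θ) - ∫ θ, φ (I j θ) ∂μ) = n / q * ∑ j, y (I j θ) ^ 2 - E := by
    intro θ
    simp only [φ, hmean, sum_sub_distrib, ← mul_sum, sum_const, card_univ, Fintype.card_fin,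
      nsmul_eq_mul]
    field_simp
  have hoeffding := measureReal_abs_sum_sub_integral_ge_le (X := fun j θ => φ (I j θ))
    (hindep.comp (fun _ => φ) fun _ => .of_discrete)
    (fun j => ((Measurable.of_discrete (f := φ)).comp (hmeas j)).aemeasurable)
    (fun j => ae_of_all _ fun θ => hφ (I j θ)) ht.le
  simp only [hsum, Fintype.card_fin] at hoeffding
  have hexponent :
      -2 * t ^ 2 / (q * (μ₁ * E / q - 0) ^ 2) ≤ -q * t ^ 2 / (2 * μ₁ ^ 2 * E ^ 2) := by
    have hr : 0 ≤ q * t ^ 2 / (2 * μ₁ ^ 2 * E ^ 2) := by positivity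
    rw [sub_zero, show (q : ℝ) * (μ₁ * E / q) ^ 2 = (μ₁ * E) ^ 2 / q by field_simp,
      div_div_eq_mul_div]
    linarith [show -2 * t ^ 2 * q / (μ₁ * E) ^ 2 = -4 * (q * t ^ 2 / (2 * μ₁ ^ 2 * E ^ 2)) by ring,
      show -q * t ^ 2 / (2 * μ₁ ^ 2 * E ^ 2) = -(q * t ^ 2 / (2 * μ₁ ^ 2 * E ^ 2)) by ring]
  rw [← ofReal_measureReal]
  exact ENNReal.ofReal_le_ofReal (hoeffding.trans (by gcongr))

/-- Let `y ∈ ℝ^n` be nonzero with coherence at most `μ₁`, i.e.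
`n ‖y‖_∞² ≤ μ₁ ‖y‖₂²` (equivalently `n·y i² ≤ μ₁·‖y‖₂²` for every `i`).  If `I 1,…,I q` are
independent uniform random indices in `{1,…,n}` and `S = ∑ j, y (I j)²`, then for every `t > 0`,
`P(|(n/q)·S − ‖y‖₂²| ≥ t) ≤ 2 exp(−q t² / (2 μ₁² ‖y‖₂⁴))`. -/
theorem stmt1 {Θ : Type*} [MeasurableSpace Θ] (μ : Measure Θ) [IsProbabilityMeasure μ]
    (n q : ℕ) (hn : 0 < n) (hq : 0 < q)
    (y : Fin n → ℝ) (hy : y ≠ 0)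
    (μ₁ : ℝ) (hcoh : ∀ i, (n : ℝ) * (y i) ^ 2 ≤ μ₁ * ∑ i', (y i') ^ 2)
    (I : Fin q → Θ → Fin n) (hmeas : ∀ j, Measurable (I j))
    (hindep : iIndepFun I μ)
    (hunif : ∀ j i, μ {θ | I j θ = i} = (n : ℝ≥0∞)⁻¹)
    (t : ℝ) (ht : 0 < t) :
    μ {θ | t ≤ |(n : ℝ) / (q : ℝ) * (∑ j, (y (I j θ)) ^ 2) - ∑ i, (y i) ^ 2|} ≤
      ENNReal.ofReal
        (2 * Real.exp (-(q : ℝ) * t ^ 2 / (2 * μ₁ ^ 2 * (∑ i, (y i) ^ 2) ^ 2))) :=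
  stmt1_general μ n q hn hq y μ₁ hcoh I hmeas hindep hunif t ht
end

section
/- (Lemma 3 of the paper.) Let y ∈ ℝ^n be a nonzero vector whose coherence satisfies μ(y) ≤ μ₁, i.e., n‖y‖_∞² ≤ μ₁‖y‖₂². Let 0 < δ₀ < 1, let q be an integer with q ≥ 8 μ₁² log(2/δ₀) and q ≤ n, and let ω be a subset of {1,…,n} of size q chosen uniformly at random. Then with probability at least 1 − δ₀, (1/2)‖y‖₂² ≤ (n/q) Σ_{i∈ω} y_i² ≤ (3/2)‖y‖₂². -/
open scoped BigOperators ENNReal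

/-- The uniform distribution over all `q`-element subsets of `{1,…,n}` (modeled as `Fin n`). -/
noncomputable def uniformSubsets (n q : ℕ) (h : q ≤ n) : PMF (Finset (Fin n)) :=
  PMF.uniformOfFinset (Finset.powersetCard q (Finset.univ : Finset (Fin n)))
    (Finset.powersetCard_nonempty.mpr (by simpa using h))

/-!
Write `dev ω = ∑_{i∈ω} a i - k · mean_R a` for a `k`-subset `ω` of `R`, where every `a i` lies in an
interval of length `c`. Hoeffding's bound `mean_ω exp (t · dev ω) ≤ exp (k (t c)² / 2)` holds for
sampling without replacement, by induction on `k`: a uniform `(k+1)`-subset is a uniform point `v`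
together with a uniform `k`-subset of `R \ {v}`, and its deviation splits as the deviation of the
`k`-subset relative to `R \ {v}` plus `(1 - k / (|R| - 1)) (a v - mean_R a)`, a centred term
controlled by Hoeffding's lemma. Chernoff's bound then gives
`P (|dev| ≥ s) ≤ 2 exp (-s² / (2 k c²))`. For `a i = y i ²` the coherence bound gives
`c = μ₁ ‖y‖² / n`, and the choice `s = q ‖y‖² / (2 n)` makes the tail `2 exp (-q / (8 μ₁²)) ≤ δ₀`.
-/

open Finset Real

theorem Real.exp_mul_le_cosh_add_div_mul_sinh {z c : ℝ} (hz : |z| ≤ c) (u : ℝ) :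
    exp (u * z) ≤ cosh (u * c) + z / c * sinh (u * c) := by
  obtain rfl | hc := (abs_nonneg z |>.trans hz).eq_or_lt
  · simp [abs_nonpos_iff.1 hz]
  obtain ⟨hzl, hzu⟩ := abs_le.1 hz
  -- `u * z` is a convex combination of `u * c` and `-(u * c)`
  have hconv := convexOn_exp.2 (Set.mem_univ (u * c)) (Set.mem_univ (-(u * c)))
    (div_nonneg (by linarith) (by positivity) : 0 ≤ (c + z) / (2 * c))
    (div_nonneg (by linarith) (by positivity) : 0 ≤ (c - z) / (2 * c)) (by field_simp; ring)
  simp only [smul_eq_mul] at hconv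
  refine (le_of_eq ?_).trans (hconv.trans_eq ?_)
  · congr 1; field_simp; ring
  · rw [cosh_eq, sinh_eq]; field_simp; ring

theorem Nat.cast_choose_add_one_mul {n k : ℕ} (hn : 0 < n) :
    (n.choose (k + 1) : ℝ) * (k + 1) = n * (n - 1).choose k := by
  have := Nat.add_one_mul_choose_eq (n - 1) k
  rw [Nat.sub_add_cancel hn] at this
  exact_mod_cast this.symm

namespace Finset

variable {α : Type*}

theorem abs_sub_expect_le_of_mem_Icc {R : Finset α} {a : α → ℝ} {b c : ℝ}
    (ha : ∀ i ∈ R, a i ∈ Set.Icc b (b + c)) {i : α} (hi : i ∈ R) :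
    |a i - 𝔼 j ∈ R, a j| ≤ c := by
  have hlo : b ≤ 𝔼 j ∈ R, a j := le_expect ⟨i, hi⟩ fun j hj => (ha j hj).1
  have hhi : 𝔼 j ∈ R, a j ≤ b + c := expect_le ⟨i, hi⟩ fun j hj => (ha j hj).2
  obtain ⟨hil, hiu⟩ := ha i hi
  exact abs_le.2 ⟨by linarith, by linarith⟩

theorem sum_exp_mul_sub_expect_le {R : Finset α} {a : α → ℝ} {c : ℝ}
    (ha : ∀ i ∈ R, |a i - 𝔼 j ∈ R, a j| ≤ c) (u : ℝ) :
    ∑ i ∈ R, exp (u * (a i - 𝔼 j ∈ R, a j)) ≤ #R * exp ((u * c) ^ 2 / 2) := by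
  have hcentred : ∑ i ∈ R, (a i - 𝔼 j ∈ R, a j) = 0 := by
    rw [sum_sub_distrib, sum_const, nsmul_eq_mul, card_mul_expect, sub_self]
  calc ∑ i ∈ R, exp (u * (a i - 𝔼 j ∈ R, a j))
      ≤ ∑ i ∈ R, (cosh (u * c) + (a i - 𝔼 j ∈ R, a j) / c * sinh (u * c)) :=
        sum_le_sum fun i hi => exp_mul_le_cosh_add_div_mul_sinh (ha i hi) u
    _ = #R * cosh (u * c) := by
        rw [sum_add_distrib, ← sum_mul, ← sum_div, hcentred]; simp
    _ ≤ #R * exp ((u * c) ^ 2 / 2) := by gcongr; exact cosh_le_exp_half_sq _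

theorem card_filter_le_exp_mul_sum_exp {β : Type*} (s : Finset β) (f : β → ℝ) {t : ℝ}
    (ht : 0 ≤ t) (x : ℝ) :
    (#{ω ∈ s | x ≤ f ω} : ℝ) ≤ exp (-(t * x)) * ∑ ω ∈ s, exp (t * f ω) := by
  rw [mul_sum, card_eq_sum_ones, Nat.cast_sum, Nat.cast_one]
  calc ∑ ω ∈ s with x ≤ f ω, (1 : ℝ)
      ≤ ∑ ω ∈ s with x ≤ f ω, exp (-(t * x)) * exp (t * f ω) := by
        refine sum_le_sum fun ω hω => ?_
        rw [← exp_add, one_le_exp_iff]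
        nlinarith [(mem_filter.1 hω).2]
    _ ≤ ∑ ω ∈ s, exp (-(t * x)) * exp (t * f ω) :=
        sum_le_sum_of_subset_of_nonneg (filter_subset _ _) fun _ _ _ => by positivity

variable [DecidableEq α]

theorem add_one_nsmul_sum_powersetCard_add_one {M : Type*} [AddCommMonoid M]
    (R : Finset α) (k : ℕ) (F : Finset α → M) :
    (k + 1) • ∑ ω ∈ R.powersetCard (k + 1), F ω =
      ∑ v ∈ R, ∑ ω ∈ (R.erase v).powersetCard k, F (insert v ω) := by
  have hcount : ∀ ω ∈ R.powersetCard (k + 1), (k + 1) • F ω = ∑ _v ∈ ω, F ω := by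
    intro ω hω
    rw [sum_const, (mem_powersetCard.1 hω).2]
  rw [smul_sum, sum_congr rfl hcount,
    sum_comm' (t' := R) (s' := fun v => {ω ∈ R.powersetCard (k + 1) | v ∈ ω})]
  · refine sum_congr rfl fun v hv =>
      (sum_nbij' (insert v) (·.erase v) ?_ ?_ ?_ ?_ fun _ _ => rfl).symm
    · intro ω hω
      have hvω : v ∉ ω := fun h => notMem_erase v R ((mem_powersetCard.1 hω).1 h)
      simp only [mem_filter, mem_powersetCard, mem_insert_self, and_true] at hω ⊢
      refine ⟨insert_subset hv (hω.1.trans (erase_subset v R)), ?_⟩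
      rw [card_insert_of_notMem hvω, hω.2]
    · intro ω hω
      simp only [mem_filter, mem_powersetCard] at hω ⊢
      exact ⟨erase_subset_erase v hω.1.1, by rw [card_erase_of_mem hω.2, hω.1.2]; rfl⟩
    · intro ω hω
      exact erase_insert fun h => notMem_erase v R ((mem_powersetCard.1 hω).1 h)
    · intro ω hω
      exact insert_erase (mem_filter.1 hω).2
  · intro ω v
    simp only [mem_filter, mem_powersetCard]
    exact ⟨fun ⟨h1, h2⟩ => ⟨⟨h1, h2⟩, h1.1 h2⟩, fun ⟨h1, _⟩ => h1⟩

theorem sum_insert_sub_mul_expect_eq {R ω : Finset α} {v : α} {k : ℕ} (hv : v ∈ R)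
    (hω : ω ∈ (R.erase v).powersetCard k) (a : α → ℝ) :
    ∑ i ∈ insert v ω, a i - (k + 1) * 𝔼 i ∈ R, a i =
      (∑ i ∈ ω, a i - k * 𝔼 i ∈ R.erase v, a i) +
        (1 - k / (#R - 1 : ℝ)) * (a v - 𝔼 i ∈ R, a i) := by
  obtain ⟨hωR, rfl⟩ := mem_powersetCard.1 hω
  rw [sum_insert fun h => notMem_erase v R (hωR h)]
  rcases ω.eq_empty_or_nonempty with rfl | hne
  · simp
  have hcard : (2 : ℝ) ≤ #R := by
    have := (card_le_card hωR).trans_lt' hne.card_pos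
    rw [card_erase_of_mem hv] at this
    norm_cast; omega
  rw [expect_eq_sum_div_card, expect_eq_sum_div_card, sum_erase_eq_sub hv,
    card_erase_of_mem hv, Nat.cast_pred (card_pos.2 ⟨v, hv⟩)]
  generalize (#R : ℝ) = r at *
  have : r - 1 ≠ 0 := by linarith
  field_simp
  ring

theorem add_one_mul_sum_powersetCard_exp_eq (R : Finset α) (a : α → ℝ) (t : ℝ) (k : ℕ) :
    (k + 1 : ℝ) * ∑ ω ∈ R.powersetCard (k + 1),
        exp (t * (∑ i ∈ ω, a i - (k + 1 : ℕ) * 𝔼 i ∈ R, a i)) =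
      ∑ v ∈ R, exp (t * (1 - k / (#R - 1 : ℝ)) * (a v - 𝔼 i ∈ R, a i)) *
        ∑ ω ∈ (R.erase v).powersetCard k, exp (t * (∑ i ∈ ω, a i - k * 𝔼 i ∈ R.erase v, a i)) := by
  rw [← Nat.cast_succ, ← nsmul_eq_mul, add_one_nsmul_sum_powersetCard_add_one]
  refine sum_congr rfl fun v hv => ?_
  rw [mul_sum]
  refine sum_congr rfl fun ω hω => ?_
  rw [← exp_add, Nat.cast_succ, sum_insert_sub_mul_expect_eq hv hω]
  ring_nf

theorem sum_powersetCard_exp_mul_sum_sub_le {R : Finset α} {a : α → ℝ} {b c : ℝ}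
    (ha : ∀ i ∈ R, a i ∈ Set.Icc b (b + c)) (t : ℝ) {k : ℕ} (hk : k ≤ #R) :
    ∑ ω ∈ R.powersetCard k, exp (t * (∑ i ∈ ω, a i - k * 𝔼 i ∈ R, a i)) ≤
      (#R).choose k * exp (k * (t * c) ^ 2 / 2) := by
  induction k generalizing R with
  | zero => simp
  | succ k ih =>
    set l : ℝ := 1 - k / (#R - 1 : ℝ) with hl_def
    have hl : l ^ 2 ≤ 1 := by
      have hk' : (k : ℝ) ≤ #R - 1 := by rw [le_sub_iff_add_le]; exact_mod_cast hk
      have hle : k / (#R - 1 : ℝ) ≤ 1 := div_le_one_of_le₀ hk' (by linarith)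
      have hnonneg : 0 ≤ k / (#R - 1 : ℝ) := div_nonneg (by positivity) (by linarith)
      nlinarith
    refine le_of_mul_le_mul_left ?_ (by positivity : (0 : ℝ) < k + 1)
    calc (k + 1 : ℝ) * ∑ ω ∈ R.powersetCard (k + 1),
          exp (t * (∑ i ∈ ω, a i - (k + 1 : ℕ) * 𝔼 i ∈ R, a i))
        = ∑ v ∈ R, exp (t * l * (a v - 𝔼 i ∈ R, a i)) * ∑ ω ∈ (R.erase v).powersetCard k,
            exp (t * (∑ i ∈ ω, a i - k * 𝔼 i ∈ R.erase v, a i)) :=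
          add_one_mul_sum_powersetCard_exp_eq R a t k
      _ ≤ ∑ v ∈ R, exp (t * l * (a v - 𝔼 i ∈ R, a i)) *
            ((#R - 1).choose k * exp (k * (t * c) ^ 2 / 2)) := by
          refine sum_le_sum fun v hv => mul_le_mul_of_nonneg_left ?_ (exp_nonneg _)
          rw [← card_erase_of_mem hv]
          exact ih (fun i hi => ha i (mem_of_mem_erase hi)) (by rw [card_erase_of_mem hv]; omega)
      _ ≤ #R * exp ((t * c) ^ 2 / 2) * ((#R - 1).choose k * exp (k * (t * c) ^ 2 / 2)) := by
          rw [← sum_mul]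
          gcongr
          refine (sum_exp_mul_sub_expect_le
            (fun i hi => abs_sub_expect_le_of_mem_Icc ha hi) _).trans ?_
          refine mul_le_mul_of_nonneg_left (exp_le_exp.2 ?_) (by positivity)
          have : (t * l * c) ^ 2 = l ^ 2 * (t * c) ^ 2 := by ring
          rw [this]
          nlinarith [sq_nonneg (t * c)]
      _ = (k + 1) * ((#R).choose (k + 1) * exp ((k + 1 : ℕ) * (t * c) ^ 2 / 2)) := by
          have hexp : ((k + 1 : ℕ) : ℝ) * (t * c) ^ 2 / 2 =
              (t * c) ^ 2 / 2 + k * (t * c) ^ 2 / 2 := by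
            push_cast; ring
          rw [hexp, exp_add]
          linear_combination (-(exp ((t * c) ^ 2 / 2) * exp (k * (t * c) ^ 2 / 2))) *
            Nat.cast_choose_add_one_mul (k := k) (by omega : 0 < #R)

theorem card_filter_le_abs_sum_sub_mul_expect_le {R : Finset α} {a : α → ℝ} {b c : ℝ}
    (ha : ∀ i ∈ R, a i ∈ Set.Icc b (b + c))
    {k : ℕ} (hk : k ≤ #R) {s : ℝ} (hs : 0 ≤ s) :
    (#{ω ∈ R.powersetCard k | s ≤ |∑ i ∈ ω, a i - k * 𝔼 i ∈ R, a i|} : ℝ) ≤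
      2 * exp (-(s ^ 2 / (2 * k * c ^ 2))) * (#R).choose k := by
  set dev : Finset α → ℝ := fun ω => ∑ i ∈ ω, a i - k * 𝔼 i ∈ R, a i
  -- the Chernoff parameter minimising `-t s + k (t c)² / 2`; it is `0` when `k c² = 0`
  set t := s / (k * c ^ 2) with ht_def
  have ht : 0 ≤ t := by positivity
  have hexponent : -(t * s) + k * (t * c) ^ 2 / 2 = -(s ^ 2 / (2 * k * c ^ 2)) := by
    rcases eq_or_ne ((k : ℝ) * c ^ 2) 0 with h | h
    · simp [t, h, mul_assoc]
    · rw [ht_def]; field_simp; ring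
  have hupper := (card_filter_le_exp_mul_sum_exp (R.powersetCard k) dev ht s).trans
    (mul_le_mul_of_nonneg_left (sum_powersetCard_exp_mul_sum_sub_le ha t hk) (exp_nonneg _))
  have hlower := card_filter_le_exp_mul_sum_exp (R.powersetCard k) (-dev ·) ht s
  have hmgf_neg := sum_powersetCard_exp_mul_sum_sub_le ha (-t) hk
  simp only [mul_neg, neg_mul, neg_sq] at hlower hmgf_neg
  replace hlower := hlower.trans (mul_le_mul_of_nonneg_left hmgf_neg (exp_nonneg _))
  calc (#{ω ∈ R.powersetCard k | s ≤ |dev ω|} : ℝ)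
      ≤ #{ω ∈ R.powersetCard k | s ≤ dev ω} + #{ω ∈ R.powersetCard k | s ≤ -dev ω} := by
        simp only [le_abs, filter_or]
        exact_mod_cast card_union_le _ _
    _ ≤ 2 * (exp (-(t * s)) * exp (k * (t * c) ^ 2 / 2)) * (#R).choose k := by
        linarith
    _ = 2 * exp (-(s ^ 2 / (2 * k * c ^ 2))) * (#R).choose k := by
        rw [← exp_add, hexponent]

end Finset

theorem PMF.ofReal_one_sub_le_toOuterMeasure_uniformOfFinset {β : Type*} {s : Finset β}
    (hs : s.Nonempty) {p : β → Prop} [DecidablePred p] {δ : ℝ}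
    (h : (#{x ∈ s | ¬p x} : ℝ) ≤ δ * #s) :
    ENNReal.ofReal (1 - δ) ≤ (PMF.uniformOfFinset s hs).toOuterMeasure {x | p x} := by
  have hpos : (0 : ℝ) < #s := by exact_mod_cast hs.card_pos
  have hsplit : (#{x ∈ s | p x} : ℝ) + #{x ∈ s | ¬p x} = #s := by
    exact_mod_cast card_filter_add_card_filter_not p
  rw [toOuterMeasure_uniformOfFinset_apply, ← ENNReal.ofReal_natCast, ← ENNReal.ofReal_natCast,
    ← ENNReal.ofReal_div_of_pos hpos]
  refine ENNReal.ofReal_le_ofReal ?_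
  rw [le_div_iff₀ hpos]
  simp only [Set.mem_ofPred_eq]
  linarith

theorem half_mul_le_abs_sub_of_notMem_Icc {m r S x : ℝ} (hm : 0 < m) (hr : 0 < r)
    (h : m / r * x ∉ Set.Icc (1 / 2 * S) (3 / 2 * S)) :
    r * (S / m) / 2 ≤ |x - r * (S / m)| := by
  set d := x - r * (S / m)
  have hx : m / r * x = S + m / r * d := by simp only [d]; field_simp; ring
  have hfar : S / 2 < m / r * |d| := by
    rw [hx] at h
    contrapose! h
    rw [← abs_of_pos (by positivity : 0 < m / r), ← abs_mul, abs_le] at h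
    constructor <;> linarith
  calc r * (S / m) / 2 = r / m * (S / 2) := by ring
    _ ≤ r / m * (m / r * |d|) := by gcongr
    _ = |d| := by field_simp

theorem two_mul_exp_neg_div_le {q μ δ : ℝ} (hμ : μ ≠ 0) (hδ : 0 < δ)
    (hq : 8 * μ ^ 2 * log (2 / δ) ≤ q) :
    2 * exp (-(q / (8 * μ ^ 2))) ≤ δ :=
  calc 2 * exp (-(q / (8 * μ ^ 2))) ≤ 2 * exp (-log (2 / δ)) := by
        gcongr; rw [le_div_iff₀ (by positivity)]; linarith
    _ = δ := by rw [exp_neg, exp_log (by positivity)]; field_simp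

/-- **Lemma 3 of the paper.** Let `y ∈ ℝ^n` be nonzero with coherence at most
`μ₁`, i.e. `n ‖y‖_∞² ≤ μ₁ ‖y‖₂²`.  Let `0 < δ₀ < 1`, let `q` be an integer with
`q ≥ 8 μ₁² log(2/δ₀)` and `q ≤ n`, and let `ω` be a uniformly random `q`-element subset of
`{1,…,n}`.  Then with probability at least `1 − δ₀`,
`(1/2)‖y‖₂² ≤ (n/q) ∑_{i∈ω} y i² ≤ (3/2)‖y‖₂²`. -/
theorem stmt2 (n q : ℕ) (y : Fin n → ℝ) (hy : y ≠ 0)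
    (μ₁ : ℝ) (hcoh : ∀ i, (n : ℝ) * (y i) ^ 2 ≤ μ₁ * ∑ i', (y i') ^ 2)
    (δ₀ : ℝ) (hδ0 : 0 < δ₀) (hδ1 : δ₀ < 1)
    (hq : 8 * μ₁ ^ 2 * Real.log (2 / δ₀) ≤ (q : ℝ)) (hqn : q ≤ n) :
    ENNReal.ofReal (1 - δ₀) ≤
      (uniformSubsets n q hqn).toOuterMeasure
        {ω | (1 / 2 : ℝ) * ∑ i, (y i) ^ 2 ≤ (n : ℝ) / (q : ℝ) * ∑ i ∈ ω, (y i) ^ 2 ∧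
          (n : ℝ) / (q : ℝ) * ∑ i ∈ ω, (y i) ^ 2 ≤ (3 / 2 : ℝ) * ∑ i, (y i) ^ 2} := by
  obtain ⟨i₀, hi₀⟩ : ∃ i, y i ≠ 0 := Function.ne_iff.1 hy
  set S := ∑ i, y i ^ 2
  have hyi₀ : 0 < y i₀ ^ 2 := by positivity
  have hS : 0 < S := sum_pos' (fun i _ => sq_nonneg (y i)) ⟨i₀, mem_univ i₀, hyi₀⟩
  have hn_pos : (0 : ℝ) < n := by exact_mod_cast i₀.pos
  have hμ : 0 < μ₁ :=
    pos_of_mul_pos_left ((by positivity : (0 : ℝ) < n * y i₀ ^ 2).trans_le (hcoh i₀)) hS.le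
  have hlog : 0 < log (2 / δ₀) := log_pos (by rw [lt_div_iff₀ hδ0]; linarith)
  have hq_pos : (0 : ℝ) < q := lt_of_lt_of_le (by positivity) hq
  set c := μ₁ * S / n
  have hrange : ∀ i ∈ univ, y i ^ 2 ∈ Set.Icc 0 (0 + c) := fun i _ =>
    ⟨sq_nonneg _, by rw [zero_add, le_div_iff₀ hn_pos]; linarith [hcoh i]⟩
  have hratio : (q * (S / n) / 2) ^ 2 / (2 * q * c ^ 2) = q / (8 * μ₁ ^ 2) := by
    simp only [c]; field_simp; ring
  refine PMF.ofReal_one_sub_le_toOuterMeasure_uniformOfFinset _ ?_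
  calc _ ≤ (#{ω ∈ univ.powersetCard q |
          q * (S / n) / 2 ≤ |∑ i ∈ ω, y i ^ 2 - q * 𝔼 i, y i ^ 2|} : ℝ) := by
        refine mod_cast card_le_card (monotone_filter_right _ fun ω _ h => ?_)
        rw [expect_eq_sum_div_card, card_univ, Fintype.card_fin]
        exact half_mul_le_abs_sub_of_notMem_Icc hn_pos hq_pos h
    _ ≤ 2 * exp (-((q * (S / n) / 2) ^ 2 / (2 * q * c ^ 2))) *
          (#(univ : Finset (Fin n))).choose q :=
        card_filter_le_abs_sum_sub_mul_expect_le hrange (by simpa using hqn) (by positivity)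
    _ ≤ δ₀ * #(univ.powersetCard q) := by
        rw [card_powersetCard, hratio]
        gcongr
        exact two_mul_exp_neg_div_le hμ.ne' hδ0 hq
end
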